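/- arXiv:2502.06399 — 4 statements merged into one kernel-verified Lean document; each statement's English description precedes it below -/
import Mathlib

section
/- Let α ∈ (1/2, 1) ∪ (1, ∞), let a_1, …, a_n be vectors in the probability simplex Δ_d ⊆ ℝ^d, with ∑_{j=1}^n a_j having all entries strictly positive, and let w[1], …, w[n] > 0 with ∑_{j=1}^n w[j] = 1. Define the operator T_f on vectors with strictly positive entries by T_f(u) := ( ∑_{j=1}^n w[j] · a_j^α / ⟨a_j^α, u⟩ )^{(1−α)/α}, where powers of vectors are taken entrywise. Then for all u, v ∈ ℝ^d with strictly positive entries, d_T(T_f(v), T_f(u)) ≤ |1 − 1/α| · d_T(v, u). -/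
/-!
Write `T_f(u) = N(u)^((1-α)/α)` with `N(u) = ∑ⱼ wⱼ bⱼ / ⟨bⱼ, u⟩` and `bⱼ = aⱼ^α`.
If `e^{-t} u ≤ v ≤ e^t u` entrywise, then `e^{-t} ⟨bⱼ, u⟩ ≤ ⟨bⱼ, v⟩ ≤ e^t ⟨bⱼ, u⟩`, and inverting
and averaging gives `e^{-t} N(u) ≤ N(v) ≤ e^t N(u)`: `N` is nonexpansive for the Thompson metric.
The entrywise power with exponent `r = (1-α)/α` multiplies every log-ratio by `r`, and
`|r| = |1 - 1/α|`.
-/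

open scoped ComplexOrder
open Matrix

noncomputable section

/-- Real power of a matrix via the functional calculus (spectral decomposition);
junk value `A` if `A` is not Hermitian. -/
noncomputable def mpow {d : ℕ} (A : Matrix (Fin d) (Fin d) ℂ) (r : ℝ) :
    Matrix (Fin d) (Fin d) ℂ :=
  if hA : A.IsHermitian then
    (hA.eigenvectorUnitary : Matrix (Fin d) (Fin d) ℂ) *
      Matrix.diagonal (fun i => ((hA.eigenvalues i ^ r : ℝ) : ℂ)) *
      star (hA.eigenvectorUnitary : Matrix (Fin d) (Fin d) ℂ)
  else A

/-- The Loewner order: `A ⪯ B` iff `B - A` is positive semidefinite. -/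
def loewnerLE {d : ℕ} (A B : Matrix (Fin d) (Fin d) ℂ) : Prop := (B - A).PosSemidef

/-- Thompson metric on positive definite matrices (extended-real valued):
`inf { r ≥ 0 | exp (-r) • V ⪯ U ⪯ exp r • V }`, equal to `⊤` if no such `r` exists. -/
noncomputable def dTmat {d : ℕ} (V U : Matrix (Fin d) (Fin d) ℂ) : EReal :=
  sInf {x : EReal | ∃ r : ℝ, 0 ≤ r ∧ x = (r : EReal) ∧
    loewnerLE (Real.exp (-r) • V) U ∧ loewnerLE U (Real.exp r • V)}

open Classical in
/-- Thompson metric on entrywise-positive vectors (extended-real valued):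
`max_i |log (v i / u i)|`. -/
noncomputable def dTvec {d : ℕ} (v u : Fin d → ℝ) : EReal :=
  (⨆ i, if 0 < v i ∧ 0 < u i then ((|Real.log (v i / u i)| : ℝ) : EReal) else (⊤ : EReal)) ⊔ 0

/-- A density matrix: Hermitian positive semidefinite with unit trace. -/
def IsDensityMatrix {d : ℕ} (A : Matrix (Fin d) (Fin d) ℂ) : Prop :=
  A.PosSemidef ∧ A.trace = 1

/-- The operator `T_F (U) = (∑ j, w j • A j ^ α / Tr[A j ^ α * U]) ^ ((1 - α)/α)`. -/
noncomputable def TF {n d : ℕ} (w : Fin n → ℝ) (A : Fin n → Matrix (Fin d) (Fin d) ℂ)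
    (α : ℝ) (U : Matrix (Fin d) (Fin d) ℂ) : Matrix (Fin d) (Fin d) ℂ :=
  mpow (∑ j, ((w j : ℂ) / Matrix.trace (mpow (A j) α * U)) • mpow (A j) α) ((1 - α) / α)

/-- The Petz–Rényi divergence of order `α` (real-valued version, intended for
positive definite `Q`): `(α - 1)⁻¹ * log Tr[A^α * Q^(1-α)]`. -/
noncomputable def petzRenyi {d : ℕ} (α : ℝ) (A Q : Matrix (Fin d) (Fin d) ℂ) : ℝ :=
  (α - 1)⁻¹ * Real.log (Matrix.trace (mpow A α * mpow Q (1 - α))).re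

open Classical in
/-- The Petz–Rényi divergence of order `α`, extended-real valued; `⊤` whenever the
defining formula is not well-defined. -/
noncomputable def petzRenyiE {d : ℕ} (α : ℝ) (A Q : Matrix (Fin d) (Fin d) ℂ) : EReal :=
  if 0 < (Matrix.trace (mpow A α * mpow Q (1 - α))).re ∧
      (1 < α → ∀ x : Fin d → ℂ, Q.mulVec x = 0 → A.mulVec x = 0) then
    (((α - 1)⁻¹ * Real.log (Matrix.trace (mpow A α * mpow Q (1 - α))).re : ℝ) : EReal)
  else ⊤

/-- The objective `F(Q) = ∑ j, w j * D_α(A j ‖ Q)`, extended-real valued. -/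
noncomputable def FE {n d : ℕ} (w : Fin n → ℝ) (A : Fin n → Matrix (Fin d) (Fin d) ℂ)
    (α : ℝ) (Q : Matrix (Fin d) (Fin d) ℂ) : EReal :=
  ∑ j, ((w j : ℝ) : EReal) * petzRenyiE α (A j) Q

/-- Membership in the probability simplex `Δ_d`. -/
def memSimplex {d : ℕ} (q : Fin d → ℝ) : Prop := (∀ i, 0 ≤ q i) ∧ ∑ i, q i = 1

/-- The classical operator `T_f (u) = (∑ j, w j • a j ^ α / ⟨a j ^ α, u⟩) ^ ((1 - α)/α)`,
entrywise. -/
noncomputable def Tf {n d : ℕ} (w : Fin n → ℝ) (a : Fin n → Fin d → ℝ) (α : ℝ)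
    (u : Fin d → ℝ) : Fin d → ℝ :=
  fun i => (∑ j, w j * (a j i ^ α) / (∑ k, (a j k ^ α) * u k)) ^ ((1 - α) / α)

open Classical in
/-- The classical Rényi divergence term, extended-real valued; `⊤` whenever the
defining formula is not well-defined. -/
noncomputable def petzVecE {d : ℕ} (α : ℝ) (a q : Fin d → ℝ) : EReal :=
  if 0 < (∑ i, a i ^ α * q i ^ (1 - α)) ∧ (1 < α → ∀ i, q i = 0 → a i = 0) then
    (((α - 1)⁻¹ * Real.log (∑ i, a i ^ α * q i ^ (1 - α)) : ℝ) : EReal)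
  else ⊤

/-- The classical objective `f(q) = ∑ j, w j * (α-1)⁻¹ * log (∑ i, (a j i)^α * (q i)^(1-α))`,
real-valued version (intended for entrywise positive `q`). -/
noncomputable def fcl {n d : ℕ} (w : Fin n → ℝ) (a : Fin n → Fin d → ℝ) (α : ℝ)
    (q : Fin d → ℝ) : ℝ :=
  ∑ j, w j * ((α - 1)⁻¹ * Real.log (∑ i, a j i ^ α * q i ^ (1 - α)))

/-- Total CES demand in a Fisher market at prices `p`. -/
noncomputable def demand {n d : ℕ} (w : Fin n → ℝ) (a : Fin n → Fin d → ℝ)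
    (ρ : Fin n → ℝ) (p : Fin d → ℝ) : Fin d → ℝ :=
  fun i => ∑ j, w j * (a j i ^ (1 / (1 - ρ j)) * p i ^ (-(1 / (1 - ρ j)))) /
    (∑ k, a j k ^ (1 / (1 - ρ j)) * p k ^ (-(ρ j / (1 - ρ j))))

open Real

lemma dTvec_eq_coe_iSup {d : ℕ} {x y : Fin d → ℝ} (hx : ∀ i, 0 < x i) (hy : ∀ i, 0 < y i) :
    dTvec x y = ((⨆ i, |log (x i / y i)| : ℝ) : EReal) := by
  have hpos : ∀ i, 0 < x i ∧ 0 < y i := fun i => ⟨hx i, hy i⟩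
  simp only [dTvec, hpos]
  rcases isEmpty_or_nonempty (Fin d) with hd | hd
  · simp
  · rw [Monotone.map_ciSup_of_continuousAt continuous_coe_real_ereal.continuousAt
      EReal.coe_strictMono.monotone (Set.finite_range _).bddAbove]
    exact sup_eq_left.2 (le_iSup_of_le hd.some (EReal.coe_nonneg.2 (abs_nonneg _)))

lemma abs_log_div_le_iff {x y t : ℝ} (hx : 0 < x) (hy : 0 < y) :
    |log (x / y)| ≤ t ↔ x ≤ exp t * y ∧ y ≤ exp t * x := by
  rw [abs_le, log_div hx.ne' hy.ne', ← log_le_log_iff hx (by positivity),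
    ← log_le_log_iff hy (by positivity), log_mul (exp_ne_zero t) hy.ne',
    log_mul (exp_ne_zero t) hx.ne', log_exp]
  constructor <;> rintro ⟨h₁, h₂⟩ <;> constructor <;> linarith

lemma abs_log_rpow_div_rpow {x y : ℝ} (hx : 0 < x) (hy : 0 < y) (r : ℝ) :
    |log (x ^ r / y ^ r)| = |r| * |log (x / y)| := by
  rw [← div_rpow hx.le hy.le, log_rpow (div_pos hx hy), abs_mul]

-- Only an inequality because of the junk value `(1 - 0) / 0 = 0`.
lemma abs_one_sub_div_self_le (α : ℝ) : |(1 - α) / α| ≤ |1 - 1 / α| := by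
  rcases eq_or_ne α 0 with rfl | hα
  · norm_num
  · rw [sub_div, div_self hα, abs_sub_comm]

lemma div_le_mul_div_of_le_mul {c x y r : ℝ} (hc : 0 ≤ c) (hx : 0 < x) (hy : 0 < y)
    (h : y ≤ r * x) : c / x ≤ r * (c / y) := by
  rw [mul_div_assoc', div_le_div_iff₀ hx hy]
  nlinarith

lemma Finset.sum_le_mul_sum_of_le_mul {ι : Type*} (s : Finset ι) {f g : ι → ℝ} {r : ℝ}
    (h : ∀ k ∈ s, f k ≤ r * g k) : ∑ k ∈ s, f k ≤ r * ∑ k ∈ s, g k := by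
  rw [Finset.mul_sum]
  exact Finset.sum_le_sum h

section InvPairingSum

variable {ι κ : Type*} [Fintype ι] [Fintype κ] {w : ι → ℝ} {b : ι → κ → ℝ}

def invPairingSum (w : ι → ℝ) (b : ι → κ → ℝ) (u : κ → ℝ) : κ → ℝ :=
  fun i => ∑ j, w j * b j i / ∑ k, b j k * u k

lemma sum_mul_pos_of_exists_pos {c u : κ → ℝ} (hc : ∀ k, 0 ≤ c k) (hc' : ∃ k, 0 < c k)
    (hu : ∀ k, 0 < u k) : 0 < ∑ k, c k * u k :=
  let ⟨k, hk⟩ := hc'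
  Finset.sum_pos' (fun k _ => mul_nonneg (hc k) (hu k).le)
    ⟨k, Finset.mem_univ k, mul_pos hk (hu k)⟩

lemma invPairingSum_pos (hw : ∀ j, 0 ≤ w j) (hb : ∀ j k, 0 ≤ b j k)
    (hrow : ∀ j, ∃ k, 0 < b j k) {u : κ → ℝ} (hu : ∀ k, 0 < u k) {i : κ}
    (hi : ∃ j, 0 < w j ∧ 0 < b j i) : 0 < invPairingSum w b u i := by
  obtain ⟨j, hwj, hbj⟩ := hi
  have hS : ∀ j, 0 < ∑ k, b j k * u k := fun j => sum_mul_pos_of_exists_pos (hb j) (hrow j) hu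
  exact Finset.sum_pos' (fun j _ => div_nonneg (mul_nonneg (hw j) (hb j i)) (hS j).le)
    ⟨j, Finset.mem_univ j, div_pos (mul_pos hwj hbj) (hS j)⟩

lemma invPairingSum_le_mul (hw : ∀ j, 0 ≤ w j) (hb : ∀ j k, 0 ≤ b j k) {x y : κ → ℝ} {r : ℝ}
    (hx : ∀ j, 0 < ∑ k, b j k * x k) (hy : ∀ j, 0 < ∑ k, b j k * y k)
    (h : ∀ k, y k ≤ r * x k) (i : κ) : invPairingSum w b x i ≤ r * invPairingSum w b y i :=
  Finset.sum_le_mul_sum_of_le_mul _ fun j _ =>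
    div_le_mul_div_of_le_mul (mul_nonneg (hw j) (hb j i)) (hx j) (hy j) <|
      Finset.sum_le_mul_sum_of_le_mul _ fun k _ => by
        simpa only [mul_left_comm] using mul_le_mul_of_nonneg_left (h k) (hb j k)

lemma abs_log_invPairingSum_div_le (hw : ∀ j, 0 ≤ w j) (hb : ∀ j k, 0 ≤ b j k)
    (hrow : ∀ j, ∃ k, 0 < b j k) {x y : κ → ℝ} (hx : ∀ k, 0 < x k) (hy : ∀ k, 0 < y k) {t : ℝ}
    (hxy : ∀ k, |log (x k / y k)| ≤ t) {i : κ} (hi : ∃ j, 0 < w j ∧ 0 < b j i) :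
    |log (invPairingSum w b x i / invPairingSum w b y i)| ≤ t := by
  have hSx : ∀ j, 0 < ∑ k, b j k * x k := fun j => sum_mul_pos_of_exists_pos (hb j) (hrow j) hx
  have hSy : ∀ j, 0 < ∑ k, b j k * y k := fun j => sum_mul_pos_of_exists_pos (hb j) (hrow j) hy
  simp only [abs_log_div_le_iff (hx _) (hy _)] at hxy
  rw [abs_log_div_le_iff (invPairingSum_pos hw hb hrow hx hi)
    (invPairingSum_pos hw hb hrow hy hi)]
  exact ⟨invPairingSum_le_mul hw hb hSx hSy (fun k => (hxy k).2) i,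
    invPairingSum_le_mul hw hb hSy hSx (fun k => (hxy k).1) i⟩

end InvPairingSum

lemma dTvec_le_mul_of_forall_abs_log_div_le {d : ℕ} {x y x' y' : Fin d → ℝ}
    (hx : ∀ i, 0 < x i) (hy : ∀ i, 0 < y i) (hx' : ∀ i, 0 < x' i) (hy' : ∀ i, 0 < y' i)
    {c : ℝ} (hc : 0 ≤ c)
    (h : ∀ t, (∀ k, |log (x k / y k)| ≤ t) → ∀ i, |log (x' i / y' i)| ≤ c * t) :
    dTvec x' y' ≤ (c : EReal) * dTvec x y := by
  rw [dTvec_eq_coe_iSup hx' hy', dTvec_eq_coe_iSup hx hy, ← EReal.coe_mul, EReal.coe_le_coe_iff]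
  refine Real.iSup_le (h _ fun k => ?_) (mul_nonneg hc (Real.iSup_nonneg fun k => abs_nonneg _))
  exact le_ciSup (f := fun k => |log (x k / y k)|) (Set.finite_range _).bddAbove k

theorem Tf_contraction_general {n d : ℕ} (α : ℝ)
    (a : Fin n → Fin d → ℝ) (ha : ∀ j, memSimplex (a j))
    (hapos : ∀ i, 0 < ∑ j, a j i)
    (w : Fin n → ℝ) (hw : ∀ j, 0 < w j)
    (u v : Fin d → ℝ) (hu : ∀ i, 0 < u i) (hv : ∀ i, 0 < v i) :
    dTvec (Tf w a α v) (Tf w a α u) ≤ ((|1 - 1/α| : ℝ) : EReal) * dTvec v u := by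
  set b : Fin n → Fin d → ℝ := fun j k => a j k ^ α
  have hb : ∀ j k, 0 ≤ b j k := fun j k => rpow_nonneg ((ha j).1 k) α
  have hrow : ∀ j, ∃ k, 0 < b j k := fun j => by
    obtain ⟨k, -, hk⟩ := (Finset.sum_pos_iff_of_nonneg fun k _ => (ha j).1 k).1
      ((ha j).2 ▸ one_pos)
    exact ⟨k, rpow_pos_of_pos hk α⟩
  have hcol : ∀ i, ∃ j, 0 < w j ∧ 0 < b j i := fun i => by
    obtain ⟨j, -, hj⟩ := (Finset.sum_pos_iff_of_nonneg fun j _ => (ha j).1 i).1 (hapos i)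
    exact ⟨j, hw j, rpow_pos_of_pos hj α⟩
  have hw' : ∀ j, 0 ≤ w j := fun j => (hw j).le
  have hN : ∀ x, (∀ k, 0 < x k) → ∀ i, 0 < invPairingSum w b x i :=
    fun x hx i => invPairingSum_pos hw' hb hrow hx (hcol i)
  have hTf : Tf w a α = fun x i => invPairingSum w b x i ^ ((1 - α) / α) := rfl
  rw [hTf]
  refine dTvec_le_mul_of_forall_abs_log_div_le hv hu (fun i => rpow_pos_of_pos (hN v hv i) _)
    (fun i => rpow_pos_of_pos (hN u hu i) _) (abs_nonneg _) fun t ht i => ?_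
  rw [abs_log_rpow_div_rpow (hN v hv i) (hN u hu i)]
  exact mul_le_mul (abs_one_sub_div_self_le α)
    (abs_log_invPairingSum_div_le hw' hb hrow hv hu ht (hcol i)) (abs_nonneg _) (abs_nonneg _)

/-- the classical operator `T_f` is a contraction with ratio `|1 - 1/α|`
with respect to the Thompson metric on entrywise positive vectors,
for `α ∈ (1/2, 1) ∪ (1, ∞)`. -/
theorem Tf_contraction {n d : ℕ} (α : ℝ)
    (hα : α ∈ Set.Ioo (1/2 : ℝ) 1 ∪ Set.Ioi (1 : ℝ))
    (a : Fin n → Fin d → ℝ) (ha : ∀ j, memSimplex (a j))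
    (hapos : ∀ i, 0 < ∑ j, a j i)
    (w : Fin n → ℝ) (hw : ∀ j, 0 < w j) (hw1 : ∑ j, w j = 1)
    (u v : Fin d → ℝ) (hu : ∀ i, 0 < u i) (hv : ∀ i, 0 < v i) :
    dTvec (Tf w a α v) (Tf w a α u) ≤ ((|1 - 1/α| : ℝ) : EReal) * dTvec v u :=
  Tf_contraction_general α a ha hapos w hw u v hu hv

end
end

section
/- Let α ∈ (1, ∞), let A_1, …, A_n be density matrices in ℂ^{d×d} with ∑_{j=1}^n A_j positive definite, let w[1], …, w[n] > 0 with ∑_{j=1}^n w[j] = 1, and define T_F(U) := ( ∑_{j=1}^n w[j] · A_j^α / Tr[A_j^α U] )^{(1−α)/α} for positive definite Hermitian U. Then for any positive definite Hermitian Q ∈ ℂ^{d×d} with Tr[Q] ≤ 1, it holds that Tr[ T_F(Q^{1−α})^{1/(1−α)} ] ≤ 1. Moreover, equality holds if and only if T_F(Q^{1−α})^{1/(1−α)} = Q. -/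
/-!
Write `M = ∑ⱼ wⱼ Aⱼ^α / Tr[Aⱼ^α Q^(1-α)]`, so that the matrix in question is `R = M^(1/α)`; the
normalisation built into `T_F` gives `Tr[R^α Q^(1-α)] = ∑ⱼ wⱼ = 1`. The key inequality is
`Tr[X^α Y^(1-α)] ≥ (Tr X)^α (Tr Y)^(1-α)` for `α > 1`, with equality only for proportional `X`, `Y`.
In eigenbases `(uᵢ)`, `(vₖ)` of `X` and `Y` the left side is `∑ᵢₖ |⟨uᵢ, vₖ⟩|² λᵢ^α μₖ^(1-α)`, the
weights `|⟨uᵢ, vₖ⟩|²` form a doubly stochastic matrix, and the convex, positively homogeneous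
function `(a, b) ↦ a^α b^(1-α)` lies above its tangent plane along the ray through
`(Tr X, Tr Y)`, strictly off that ray. Hence `(Tr R)^α ≤ (Tr R)^α (Tr Q)^(1-α) ≤ 1`, and
`Tr R = 1` forces `Tr Q = 1` and `R ∝ Q`, i.e. `R = Q`.
-/

open scoped ComplexOrder
open Matrix

noncomputable section

section Tangent

variable {α a b r : ℝ}

-- Both sides of the tangent-plane inequality in the form `b r^α (1 + ·)`, ready for Bernoulli.
lemma rpow_mul_rpow_one_sub_eq (ha : 0 ≤ a) (hb : 0 < b) (hr : 0 < r) :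
    a ^ α * b ^ (1 - α) = b * r ^ α * (1 + (a / (r * b) - 1)) ^ α := by
  rw [add_sub_cancel, Real.div_rpow ha (by positivity), Real.mul_rpow hr.le hb.le,
    Real.rpow_sub hb, Real.rpow_one]
  field_simp

lemma tangent_eq_mul_one_add (hb : 0 < b) (hr : 0 < r) :
    α * r ^ (α - 1) * a + (1 - α) * r ^ α * b = b * r ^ α * (1 + α * (a / (r * b) - 1)) := by
  rw [Real.rpow_sub hr, Real.rpow_one]
  field_simp
  ring

lemma tangent_le_rpow_mul_rpow_one_sub (hα : 1 ≤ α) (ha : 0 ≤ a) (hb : 0 < b) (hr : 0 < r) :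
    α * r ^ (α - 1) * a + (1 - α) * r ^ α * b ≤ a ^ α * b ^ (1 - α) := by
  rw [tangent_eq_mul_one_add hb hr, rpow_mul_rpow_one_sub_eq ha hb hr]
  gcongr
  exact one_add_mul_self_le_rpow_one_add
    (by linarith [div_nonneg ha (by positivity : 0 ≤ r * b)]) hα

lemma tangent_lt_rpow_mul_rpow_one_sub (hα : 1 < α) (ha : 0 ≤ a) (hb : 0 < b) (hr : 0 < r)
    (hab : a ≠ r * b) :
    α * r ^ (α - 1) * a + (1 - α) * r ^ α * b < a ^ α * b ^ (1 - α) := by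
  rw [tangent_eq_mul_one_add hb hr, rpow_mul_rpow_one_sub_eq ha hb hr]
  gcongr
  refine one_add_mul_self_lt_rpow_one_add
    (by linarith [div_nonneg ha (by positivity : 0 ≤ r * b)]) ?_ hα
  rwa [sub_ne_zero, ne_eq, div_eq_one_iff_eq (by positivity)]

lemma tangent_mul_self_eq (b : ℝ) (hr : 0 < r) :
    α * r ^ (α - 1) * (r * b) + (1 - α) * r ^ α * b = r ^ α * b := by
  rw [Real.rpow_sub hr, Real.rpow_one]
  field_simp
  ring

end Tangent

section DoublyStochastic

open Finset

variable {ι : Type*} [Fintype ι] [DecidableEq ι] {P : Matrix ι ι ℝ} {a b : ι → ℝ} {α : ℝ}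

lemma sum_sum_doublyStochastic_mul_add (hP : P ∈ doublyStochastic ℝ ι) (c₁ c₂ : ℝ) :
    ∑ i, ∑ k, P i k * (c₁ * a i + c₂ * b k) = c₁ * ∑ i, a i + c₂ * ∑ k, b k := by
  simp only [mul_add, sum_add_distrib]
  rw [sum_comm (f := fun i k => P i k * (c₂ * b k)), mul_sum, mul_sum]
  congr 1 <;> refine sum_congr rfl fun i _ => ?_
  · rw [← sum_mul, sum_row_of_mem_doublyStochastic hP, one_mul]
  · rw [← sum_mul, sum_col_of_mem_doublyStochastic hP, one_mul]

lemma rpow_sum_mul_rpow_sum_eq_sum_tangent (hP : P ∈ doublyStochastic ℝ ι)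
    (hs : 0 < ∑ i, a i) (ht : 0 < ∑ k, b k) :
    (∑ i, a i) ^ α * (∑ k, b k) ^ (1 - α) =
      ∑ i, ∑ k, P i k * (α * ((∑ i, a i) / ∑ k, b k) ^ (α - 1) * a i +
        (1 - α) * ((∑ i, a i) / ∑ k, b k) ^ α * b k) := by
  set s := ∑ i, a i
  set t := ∑ k, b k
  rw [sum_sum_doublyStochastic_mul_add hP]
  have h := tangent_mul_self_eq (α := α) t (div_pos hs ht)
  rw [div_mul_cancel₀ s ht.ne'] at h
  rw [h, Real.div_rpow hs.le ht.le, Real.rpow_sub ht, Real.rpow_one]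
  field_simp

theorem rpow_sum_mul_rpow_sum_le (hα : 1 < α) (hP : P ∈ doublyStochastic ℝ ι)
    (ha : ∀ i, 0 ≤ a i) (hb : ∀ k, 0 < b k) (hs : 0 < ∑ i, a i) :
    (∑ i, a i) ^ α * (∑ k, b k) ^ (1 - α) ≤ ∑ i, ∑ k, P i k * (a i ^ α * b k ^ (1 - α)) := by
  have : Nonempty ι := univ_nonempty_iff.mp (nonempty_of_sum_ne_zero hs.ne')
  have ht : 0 < ∑ k, b k := sum_pos (fun k _ => hb k) univ_nonempty
  rw [rpow_sum_mul_rpow_sum_eq_sum_tangent hP hs ht]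
  gcongr with i _ k _
  · exact nonneg_of_mem_doublyStochastic hP
  · exact tangent_le_rpow_mul_rpow_one_sub hα.le (ha i) (hb k) (div_pos hs ht)

theorem mul_sum_eq_mul_sum_of_rpow_sum_mul_rpow_sum_eq (hα : 1 < α)
    (hP : P ∈ doublyStochastic ℝ ι) (ha : ∀ i, 0 ≤ a i) (hb : ∀ k, 0 < b k)
    (hs : 0 < ∑ i, a i)
    (heq : ∑ i, ∑ k, P i k * (a i ^ α * b k ^ (1 - α)) = (∑ i, a i) ^ α * (∑ k, b k) ^ (1 - α))
    {i k : ι} (hik : P i k ≠ 0) :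
    a i * ∑ l, b l = b k * ∑ l, a l := by
  have : Nonempty ι := univ_nonempty_iff.mp (nonempty_of_sum_ne_zero hs.ne')
  have ht : 0 < ∑ k, b k := sum_pos (fun k _ => hb k) univ_nonempty
  have hle : ∀ i k, P i k * (α * ((∑ i, a i) / ∑ k, b k) ^ (α - 1) * a i +
      (1 - α) * ((∑ i, a i) / ∑ k, b k) ^ α * b k) ≤ P i k * (a i ^ α * b k ^ (1 - α)) :=
    fun i k => mul_le_mul_of_nonneg_left
      (tangent_le_rpow_mul_rpow_one_sub hα.le (ha i) (hb k) (div_pos hs ht))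
      (nonneg_of_mem_doublyStochastic hP)
  by_contra hne
  refine heq.not_gt ?_
  rw [rpow_sum_mul_rpow_sum_eq_sum_tangent hP hs ht]
  refine sum_lt_sum (fun i _ => sum_le_sum fun k _ => hle i k) ⟨i, mem_univ i, ?_⟩
  refine sum_lt_sum (fun k _ => hle i k) ⟨k, mem_univ k, ?_⟩
  refine mul_lt_mul_of_pos_left (tangent_lt_rpow_mul_rpow_one_sub hα (ha i) (hb k)
    (div_pos hs ht) fun h => hne ?_) ((nonneg_of_mem_doublyStochastic hP).lt_of_ne' hik)
  rw [h]
  field_simp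

end DoublyStochastic

section Mpow

variable {d : ℕ} {X Y : Matrix (Fin d) (Fin d) ℂ}

lemma mpow_eq_cfc (hX : X.IsHermitian) (r : ℝ) : mpow X r = cfc (fun x : ℝ => x ^ r) X := by
  rw [hX.cfc_eq, mpow, dif_pos hX, IsHermitian.cfc]
  rfl

lemma isHermitian_mpow (hX : X.IsHermitian) (r : ℝ) : (mpow X r).IsHermitian := by
  rw [mpow_eq_cfc hX]
  exact cfc_predicate _ X

lemma posSemidef_mpow (hX : X.PosSemidef) (r : ℝ) : (mpow X r).PosSemidef := by
  rw [mpow, dif_pos hX.1]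
  simpa [star_eq_conjTranspose] using (PosSemidef.diagonal fun i => by
    simpa using Real.rpow_nonneg (hX.eigenvalues_nonneg i) r).mul_mul_conjTranspose_same
    (hX.1.eigenvectorUnitary : Matrix (Fin d) (Fin d) ℂ)

lemma mpow_one (hX : X.IsHermitian) : mpow X 1 = X := by
  simp only [mpow_eq_cfc hX, Real.rpow_one]
  exact cfc_id' ℝ X

lemma mpow_mpow (hX : X.PosSemidef) (r s : ℝ) : mpow (mpow X r) s = mpow X (r * s) := by
  rw [mpow_eq_cfc (isHermitian_mpow hX.1 r), mpow_eq_cfc hX.1, mpow_eq_cfc hX.1,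
    ← cfc_comp' _ _ X (((spectrum ℝ X).toFinite.image _).continuousOn _)
      ((spectrum ℝ X).toFinite.continuousOn _) hX.1.isSelfAdjoint]
  refine cfc_congr fun x hx => ?_
  obtain ⟨i, rfl⟩ := hX.1.spectrum_real_eq_range_eigenvalues ▸ hx
  simp [Real.rpow_mul (hX.eigenvalues_nonneg i)]

lemma mpow_mul_mpow (hX : X.PosDef) (r s : ℝ) : mpow X r * mpow X s = mpow X (r + s) := by
  rw [mpow_eq_cfc hX.1, mpow_eq_cfc hX.1, mpow_eq_cfc hX.1,
    ← cfc_mul _ _ X ((spectrum ℝ X).toFinite.continuousOn _)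
      ((spectrum ℝ X).toFinite.continuousOn _)]
  refine cfc_congr fun x hx => ?_
  obtain ⟨i, rfl⟩ := hX.1.spectrum_real_eq_range_eigenvalues ▸ hx
  simp [Real.rpow_add (hX.eigenvalues_pos i)]

end Mpow

section Overlap

variable {n : Type*} [Fintype n] [DecidableEq n]

lemma sum_normSq_row_eq_one {U : Matrix n n ℂ} (hU : U ∈ unitaryGroup n ℂ) (i : n) :
    ∑ k, Complex.normSq (U i k) = 1 := by
  have h := congrFun (congrFun (mem_unitaryGroup_iff.mp hU) i) i
  simp only [mul_apply, star_apply, one_apply_eq, RCLike.star_def, Complex.mul_conj] at h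
  exact_mod_cast h

lemma normSq_mem_doublyStochastic {U : Matrix n n ℂ} (hU : U ∈ unitaryGroup n ℂ) :
    of (fun i k => Complex.normSq (U i k)) ∈ doublyStochastic ℝ n := by
  refine mem_doublyStochastic_iff_sum.mpr ⟨fun i k => Complex.normSq_nonneg _,
    sum_normSq_row_eq_one hU, fun k => ?_⟩
  simpa using sum_normSq_row_eq_one (transpose_mem_unitaryGroup_iff.mpr hU) k

lemma trace_diagonal_mul_diagonal_mul_star (W : Matrix n n ℂ) (a b : n → ℝ) :
    (diagonal (fun i => (a i : ℂ)) * W * diagonal (fun k => (b k : ℂ)) * star W).trace =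
      ((∑ i, ∑ k, Complex.normSq (W i k) * (a i * b k) : ℝ) : ℂ) := by
  push_cast
  refine Finset.sum_congr rfl fun i _ => ?_
  rw [diag, mul_apply]
  refine Finset.sum_congr rfl fun k _ => ?_
  rw [mul_diagonal, diagonal_mul, star_apply, RCLike.star_def, ← Complex.mul_conj]
  ring

end Overlap

section EigenOverlap

variable {d : ℕ} {X Y : Matrix (Fin d) (Fin d) ℂ}

def eigenOverlap (hX : X.IsHermitian) (hY : Y.IsHermitian) : Matrix (Fin d) (Fin d) ℝ :=
  of fun i k => Complex.normSq
    ((star (hX.eigenvectorUnitary : Matrix (Fin d) (Fin d) ℂ) * hY.eigenvectorUnitary) i k)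

lemma eigenOverlap_mem_doublyStochastic (hX : X.IsHermitian) (hY : Y.IsHermitian) :
    eigenOverlap hX hY ∈ doublyStochastic ℝ (Fin d) :=
  normSq_mem_doublyStochastic (star hX.eigenvectorUnitary * hY.eigenvectorUnitary).2

lemma trace_mpow_mul_mpow (hX : X.IsHermitian) (hY : Y.IsHermitian) (r s : ℝ) :
    (mpow X r * mpow Y s).trace = ((∑ i, ∑ k, eigenOverlap hX hY i k *
      (hX.eigenvalues i ^ r * hY.eigenvalues k ^ s) : ℝ) : ℂ) := by
  simp only [eigenOverlap, of_apply]
  rw [← trace_diagonal_mul_diagonal_mul_star _ (fun i => hX.eigenvalues i ^ r)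
    (fun k => hY.eigenvalues k ^ s), mpow, dif_pos hX, mpow, dif_pos hY]
  simp only [mul_assoc, StarMul.star_mul, star_star]
  rw [trace_mul_comm]
  simp only [mul_assoc]

lemma re_trace_eq_sum_eigenvalues (hX : X.IsHermitian) : X.trace.re = ∑ i, hX.eigenvalues i := by
  simp [hX.trace_eq_sum_eigenvalues]

lemma smul_eq_smul_of_eigenOverlap (hX : X.IsHermitian) (hY : Y.IsHermitian) {s t : ℝ}
    (h : ∀ i k, eigenOverlap hX hY i k ≠ 0 → hX.eigenvalues i * t = hY.eigenvalues k * s) :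
    t • X = s • Y := by
  set U : Matrix (Fin d) (Fin d) ℂ := ↑hX.eigenvectorUnitary
  set V : Matrix (Fin d) (Fin d) ℂ := ↑hY.eigenvectorUnitary
  set DX := diagonal (fun i => (hX.eigenvalues i : ℂ))
  set DY := diagonal (fun k => (hY.eigenvalues k : ℂ))
  have hU : U * star U = 1 := mem_unitaryGroup_iff.mp hX.eigenvectorUnitary.2
  have hV : V * star V = 1 := mem_unitaryGroup_iff.mp hY.eigenvectorUnitary.2
  have key : (t : ℂ) • (DX * (star U * V)) = (s : ℂ) • ((star U * V) * DY) := by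
    ext i k
    simp only [Matrix.smul_apply, DX, DY, diagonal_mul, mul_diagonal, smul_eq_mul]
    by_cases hW : (star U * V) i k = 0
    · simp [hW]
    · have := h i k (by simpa [eigenOverlap, Complex.normSq_eq_zero] using hW)
      have hC : (hX.eigenvalues i : ℂ) * t = hY.eigenvalues k * s := by exact_mod_cast this
      linear_combination (star U * V) i k * hC
  calc t • X = t • (U * DX * star U) := by
        congr 1
        exact hX.spectral_theorem
    _ = U * ((t : ℂ) • (DX * (star U * V))) * star V := by
        simp only [Matrix.mul_smul, Matrix.smul_mul, mul_assoc, hV, mul_one, Complex.coe_smul]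
    _ = U * ((s : ℂ) • ((star U * V) * DY)) * star V := by rw [key]
    _ = s • (V * DY * star V) := by
        simp only [Matrix.mul_smul, Matrix.smul_mul, mul_assoc, Complex.coe_smul]
        rw [← mul_assoc U, hU, one_mul]
    _ = s • Y := by
        congr 1
        exact hY.spectral_theorem.symm

end EigenOverlap

section PetzRenyi

variable {d : ℕ} {X Y : Matrix (Fin d) (Fin d) ℂ} {α : ℝ}

theorem rpow_re_trace_mul_rpow_re_trace_le (hα : 1 < α) (hX : X.PosSemidef) (hY : Y.PosDef)
    (hX0 : 0 < X.trace.re) :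
    X.trace.re ^ α * Y.trace.re ^ (1 - α) ≤ (mpow X α * mpow Y (1 - α)).trace.re := by
  rw [re_trace_eq_sum_eigenvalues hX.1] at hX0 ⊢
  rw [re_trace_eq_sum_eigenvalues hY.1, trace_mpow_mul_mpow hX.1 hY.1, Complex.ofReal_re]
  exact rpow_sum_mul_rpow_sum_le hα (eigenOverlap_mem_doublyStochastic hX.1 hY.1)
    hX.eigenvalues_nonneg hY.eigenvalues_pos hX0

theorem smul_eq_smul_of_re_trace_mpow_mul_mpow_eq (hα : 1 < α) (hX : X.PosSemidef)
    (hY : Y.PosDef) (hX0 : 0 < X.trace.re)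
    (heq : (mpow X α * mpow Y (1 - α)).trace.re = X.trace.re ^ α * Y.trace.re ^ (1 - α)) :
    Y.trace.re • X = X.trace.re • Y := by
  rw [re_trace_eq_sum_eigenvalues hX.1] at hX0 heq ⊢
  rw [re_trace_eq_sum_eigenvalues hY.1, trace_mpow_mul_mpow hX.1 hY.1, Complex.ofReal_re] at heq
  rw [re_trace_eq_sum_eigenvalues hY.1]
  exact smul_eq_smul_of_eigenOverlap hX.1 hY.1 fun i k hik =>
    mul_sum_eq_mul_sum_of_rpow_sum_mul_rpow_sum_eq hα
      (eigenOverlap_mem_doublyStochastic hX.1 hY.1) hX.eigenvalues_nonneg hY.eigenvalues_pos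
      hX0 heq hik

lemma trace_mpow_mul_mpow_pos (hα : 1 < α) (hX : X.PosSemidef) (hY : Y.PosDef)
    (hX0 : 0 < X.trace.re) : 0 < (mpow X α * mpow Y (1 - α)).trace := by
  have : Nonempty (Fin d) := by
    by_contra h
    simp [not_nonempty_iff.mp h] at hX0
  have hY0 : 0 < Y.trace.re := (Complex.lt_def.mp hY.trace_pos).1
  refine Complex.lt_def.mpr ⟨?_, by simp [trace_mpow_mul_mpow hX.1 hY.1]⟩
  exact (by positivity : (0 : ℝ) < _).trans_le (rpow_re_trace_mul_rpow_re_trace_le hα hX hY hX0)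

theorem trace_le_one_of_trace_mpow_mul_mpow_eq_one (hα : 1 < α) (hX : X.PosSemidef)
    (hY : Y.PosDef) (hY1 : Y.trace ≤ 1) (h1 : (mpow X α * mpow Y (1 - α)).trace = 1) :
    X.trace ≤ 1 ∧ (X.trace = 1 ↔ X = Y) := by
  have : Nonempty (Fin d) := by
    by_contra h
    simp [not_nonempty_iff.mp h] at h1
  have hXim : X.trace.im = 0 := by simpa using (Complex.le_def.mp hX.trace_nonneg).2.symm
  have ht0 : 0 < Y.trace.re := (Complex.lt_def.mp hY.trace_pos).1
  have ht1 : Y.trace.re ≤ 1 := by simpa using (Complex.le_def.mp hY1).1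
  have hle (hs : 0 < X.trace.re) : X.trace.re ^ α * Y.trace.re ^ (1 - α) ≤ 1 := by
    simpa [h1] using rpow_re_trace_mul_rpow_re_trace_le hα hX hY hs
  have htα : 1 ≤ Y.trace.re ^ (1 - α) :=
    Real.one_le_rpow_of_pos_of_le_one_of_nonpos ht0 ht1 (by linarith)
  have hs1 : X.trace.re ≤ 1 := by
    by_contra! hs
    have := Real.one_lt_rpow hs (by linarith : 0 < α)
    nlinarith [hle (by linarith)]
  refine ⟨Complex.le_def.mpr ⟨by simpa using hs1, by simpa using hXim⟩,
    fun hX1 => ?_, fun hXY => ?_⟩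
  · have hs : X.trace.re = 1 := by simp [hX1]
    have ht : Y.trace.re = 1 := by
      have := hle (by simp [hs])
      rw [hs, Real.one_rpow, one_mul, Real.rpow_le_one_iff_of_pos ht0] at this
      rcases this with ⟨h, -⟩ | ⟨-, h⟩ <;> linarith
    simpa [hs, ht] using smul_eq_smul_of_re_trace_mpow_mul_mpow_eq hα hX hY (by simp [hs])
      (by simp [h1, hs, ht])
  · subst hXY
    rwa [mpow_mul_mpow hY, add_sub_cancel, mpow_one hY.1] at h1

end PetzRenyi

lemma trace_sum_div_trace_smul_mul {ι n : Type*} [Fintype n] (s : Finset ι) (w : ι → ℂ)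
    (B : ι → Matrix n n ℂ) (C : Matrix n n ℂ) (h : ∀ j ∈ s, (B j * C).trace ≠ 0) :
    ((∑ j ∈ s, (w j / (B j * C).trace) • B j) * C).trace = ∑ j ∈ s, w j := by
  rw [Finset.sum_mul, trace_sum]
  refine Finset.sum_congr rfl fun j hj => ?_
  rw [smul_mul, trace_smul, smul_eq_mul, div_mul_cancel₀ _ (h j hj)]

theorem TF_trace_bound_general {n d : ℕ} (α : ℝ) (hα : 1 < α)
    (A : Fin n → Matrix (Fin d) (Fin d) ℂ) (hA : ∀ j, IsDensityMatrix (A j))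
    (w : Fin n → ℝ) (hw : ∀ j, 0 < w j) (hw1 : ∑ j, w j = 1)
    (Q : Matrix (Fin d) (Fin d) ℂ) (hQ : Q.PosDef) (hTr : Q.trace ≤ 1) :
    (mpow (TF w A α (mpow Q (1 - α))) (1 / (1 - α))).trace ≤ 1 ∧
      ((mpow (TF w A α (mpow Q (1 - α))) (1 / (1 - α))).trace = 1 ↔
        mpow (TF w A α (mpow Q (1 - α))) (1 / (1 - α)) = Q) := by
  have hτ j : 0 < (mpow (A j) α * mpow Q (1 - α)).trace :=
    trace_mpow_mul_mpow_pos hα (hA j).1 hQ (by simp [(hA j).2])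
  set M := ∑ j, ((w j : ℂ) / (mpow (A j) α * mpow Q (1 - α)).trace) • mpow (A j) α
  have hM : M.PosSemidef := posSemidef_sum _ fun j _ =>
    (posSemidef_mpow (hA j).1 α).smul (div_pos (by exact_mod_cast hw j) (hτ j)).le
  have hTF : mpow (TF w A α (mpow Q (1 - α))) (1 / (1 - α)) = mpow M (1 / α) := by
    rw [TF, mpow_mpow hM]
    congr 1
    field_simp [(by linarith : 1 - α ≠ 0)]
  rw [hTF]
  refine trace_le_one_of_trace_mpow_mul_mpow_eq_one hα (posSemidef_mpow hM _) hQ hTr ?_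
  rw [mpow_mpow hM, one_div_mul_cancel (by linarith), mpow_one hM.1,
    trace_sum_div_trace_smul_mul _ _ _ _ fun j _ => (hτ j).ne']
  exact_mod_cast hw1

/-- for `α > 1` and positive definite `Q` with `Tr[Q] ≤ 1`, one has
`Tr[T_F(Q^(1-α))^(1/(1-α))] ≤ 1`, with equality iff `T_F(Q^(1-α))^(1/(1-α)) = Q`. -/
theorem TF_trace_bound {n d : ℕ} (α : ℝ) (hα : 1 < α)
    (A : Fin n → Matrix (Fin d) (Fin d) ℂ) (hA : ∀ j, IsDensityMatrix (A j))
    (hApos : (∑ j, A j).PosDef)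
    (w : Fin n → ℝ) (hw : ∀ j, 0 < w j) (hw1 : ∑ j, w j = 1)
    (Q : Matrix (Fin d) (Fin d) ℂ) (hQ : Q.PosDef) (hTr : Q.trace ≤ 1) :
    (mpow (TF w A α (mpow Q (1 - α))) (1 / (1 - α))).trace ≤ 1 ∧
      ((mpow (TF w A α (mpow Q (1 - α))) (1 / (1 - α))).trace = 1 ↔
        mpow (TF w A α (mpow Q (1 - α))) (1 / (1 - α)) = Q) :=
  TF_trace_bound_general α hα A hA w hw hw1 Q hQ hTr
end
end

section
/- Let α ∈ (0, 1) ∪ (1, ∞), let A_1, …, A_n be density matrices in ℂ^{d×d} with ∑_{j=1}^n A_j positive definite, let w[1], …, w[n] > 0 with ∑_{j=1}^n w[j] = 1, and set F(Q) := ∑_{j=1}^n w[j] D_α(A_j ‖ Q). Then for all positive definite Hermitian U, V ∈ ℂ^{d×d}, F(U) − F(V) ≤ |1/(α−1)| · d_T( V^{1−α}, U^{1−α} ). -/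
open scoped ComplexOrder
open Matrix

noncomputable section

/-! A Thompson sandwich `exp (-r) • V^(1-α) ⪯ U^(1-α) ⪯ exp r • V^(1-α)` is preserved by
`X ↦ Tr[A^α X]`, since `A^α` is positive semidefinite. Hence each `Tr[A^α U^(1-α)]` lies between
`exp (-r)` and `exp r` times `Tr[A^α V^(1-α)]`, so the two logarithms differ by at most `r`, and
the divergences by at most `|1/(α-1)| r`. Averaging with the weights `w` and taking the infimum
over admissible `r` gives the bound. -/

namespace Matrix

variable {n 𝕜 : Type*} [Fintype n] [RCLike 𝕜]

open scoped MatrixOrder in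
theorem PosSemidef.trace_mul_nonneg {P M : Matrix n n 𝕜} (hP : P.PosSemidef)
    (hM : M.PosSemidef) : 0 ≤ (P * M).trace := by
  classical
  obtain ⟨B, rfl⟩ := CStarAlgebra.nonneg_iff_eq_star_mul_self.mp hP.nonneg
  rw [Matrix.mul_assoc, trace_mul_comm, star_eq_conjTranspose]
  exact (hM.mul_mul_conjTranspose_same B).trace_nonneg

theorem PosSemidef.trace_mul_mono {P X Y : Matrix n n 𝕜} (hP : P.PosSemidef)
    (hXY : (Y - X).PosSemidef) : (P * X).trace ≤ (P * Y).trace := by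
  simpa only [Matrix.mul_sub, trace_sub, sub_nonneg] using hP.trace_mul_nonneg hXY

end Matrix

theorem mpow_posSemidef {d : ℕ} {A : Matrix (Fin d) (Fin d) ℂ} (hA : A.PosSemidef) (r : ℝ) :
    (mpow A r).PosSemidef := by
  rw [mpow, dif_pos hA.1, star_eq_conjTranspose]
  refine (posSemidef_diagonal_iff.mpr fun i => ?_).mul_mul_conjTranspose_same _
  exact Complex.zero_le_real.mpr (Real.rpow_nonneg (hA.eigenvalues_nonneg i) r)

open Real in
theorem Real.abs_log_sub_log_le_of_exp_neg_mul_le_of_le_exp_mul {x y r : ℝ} (hr : 0 ≤ r)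
    (h₁ : exp (-r) * y ≤ x) (h₂ : x ≤ exp r * y) : |log x - log y| ≤ r := by
  wlog hy : 0 ≤ y generalizing x y
  · -- `log` is even, and the two bounds also hold for `-x`, `-y`.
    have hexp : exp (-r) ≤ exp r := exp_le_exp.2 (by linarith)
    have := this (x := -x) (y := -y) (by nlinarith) (by nlinarith) (by linarith)
    rwa [log_neg_eq_log, log_neg_eq_log] at this
  rcases hy.eq_or_lt with rfl | hy
  · obtain rfl : x = 0 := by simp only [mul_zero] at h₁ h₂; linarith
    simpa using hr
  have hx : 0 < x := lt_of_lt_of_le (by positivity) h₁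
  have hlower : log y - r ≤ log x := by
    rw [sub_eq_add_neg, le_log_iff_exp_le hx, exp_add, exp_log hy]
    linarith
  have hupper : log x ≤ log y + r := by
    rw [log_le_iff_le_exp hx, exp_add, exp_log hy]
    linarith
  exact abs_sub_le_iff.2 ⟨by linarith, by linarith⟩

theorem Finset.sum_mul_sub_sum_mul_le {ι R : Type*} [CommRing R] [PartialOrder R]
    [IsOrderedRing R] {s : Finset ι} {w f g : ι → R} {c : R} (hw : ∀ i ∈ s, 0 ≤ w i)
    (hw1 : ∑ i ∈ s, w i = 1) (h : ∀ i ∈ s, f i - g i ≤ c) :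
    ∑ i ∈ s, w i * f i - ∑ i ∈ s, w i * g i ≤ c :=
  calc ∑ i ∈ s, w i * f i - ∑ i ∈ s, w i * g i = ∑ i ∈ s, w i * (f i - g i) := by
        simp only [mul_sub, Finset.sum_sub_distrib]
    _ ≤ ∑ i ∈ s, w i * c :=
        Finset.sum_le_sum fun i hi => mul_le_mul_of_nonneg_left (h i hi) (hw i hi)
    _ = c := by rw [← Finset.sum_mul, hw1, one_mul]

theorem petzRenyi_sub_le_of_thompson {d : ℕ} {α r : ℝ} {A U V : Matrix (Fin d) (Fin d) ℂ}
    (hA : A.PosSemidef) (hr : 0 ≤ r)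
    (h₁ : loewnerLE (Real.exp (-r) • mpow V (1 - α)) (mpow U (1 - α)))
    (h₂ : loewnerLE (mpow U (1 - α)) (Real.exp r • mpow V (1 - α))) :
    petzRenyi α A U - petzRenyi α A V ≤ |1 / (α - 1)| * r := by
  have hP := mpow_posSemidef hA α
  have re_trace_smul (c : ℝ) : (trace (mpow A α * (c • mpow V (1 - α)))).re =
      c * (trace (mpow A α * mpow V (1 - α))).re := by
    rw [Matrix.mul_smul, trace_smul, Complex.smul_re, smul_eq_mul]
  have hlog := Real.abs_log_sub_log_le_of_exp_neg_mul_le_of_le_exp_mul hr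
    (re_trace_smul _ ▸ (Complex.le_def.1 (hP.trace_mul_mono h₁)).1)
    (re_trace_smul _ ▸ (Complex.le_def.1 (hP.trace_mul_mono h₂)).1)
  calc petzRenyi α A U - petzRenyi α A V
      = (α - 1)⁻¹ * (Real.log (trace (mpow A α * mpow U (1 - α))).re -
          Real.log (trace (mpow A α * mpow V (1 - α))).re) := by
        simp only [petzRenyi, mul_sub]
    _ ≤ |1 / (α - 1)| * |Real.log (trace (mpow A α * mpow U (1 - α))).re -
          Real.log (trace (mpow A α * mpow V (1 - α))).re| := by
        rw [one_div, ← abs_mul]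
        exact le_abs_self _
    _ ≤ |1 / (α - 1)| * r := mul_le_mul_of_nonneg_left hlog (abs_nonneg _)

theorem coe_le_mul_dTmat {d : ℕ} {V U : Matrix (Fin d) (Fin d) ℂ} {L κ : ℝ} (hκ : 0 < κ)
    (h : ∀ r : ℝ, 0 ≤ r → loewnerLE (Real.exp (-r) • V) U → loewnerLE U (Real.exp r • V) →
      L ≤ κ * r) :
    (L : EReal) ≤ κ * dTmat V U := by
  have hdiv : ((L / κ : ℝ) : EReal) ≤ dTmat V U := by
    refine le_sInf ?_
    rintro _ ⟨r, hr, rfl, h₁, h₂⟩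
    exact EReal.coe_le_coe_iff.2 ((div_le_iff₀' hκ).2 (h r hr h₁ h₂))
  calc (L : EReal) = κ * ((L / κ : ℝ) : EReal) := by
        rw [← EReal.coe_mul, mul_div_cancel₀ _ hκ.ne']
    _ ≤ κ * dTmat V U := mul_le_mul_of_nonneg_left hdiv (EReal.coe_nonneg.2 hκ.le)

theorem fval_thompson_bound_general {n d : ℕ} (α : ℝ)
    (hα : α ∈ Set.Ioo (0 : ℝ) 1 ∪ Set.Ioi (1 : ℝ))
    (A : Fin n → Matrix (Fin d) (Fin d) ℂ) (hA : ∀ j, IsDensityMatrix (A j))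
    (w : Fin n → ℝ) (hw : ∀ j, 0 < w j) (hw1 : ∑ j, w j = 1)
    (U V : Matrix (Fin d) (Fin d) ℂ) :
    (((∑ j, w j * petzRenyi α (A j) U) - (∑ j, w j * petzRenyi α (A j) V) : ℝ) : EReal) ≤
      ((|1 / (α - 1)| : ℝ) : EReal) * dTmat (mpow V (1 - α)) (mpow U (1 - α)) := by
  have hα1 : α - 1 ≠ 0 := sub_ne_zero.2 (hα.elim (fun h => h.2.ne) fun h => h.ne')
  refine coe_le_mul_dTmat (abs_pos.2 (one_div_ne_zero hα1)) fun r hr h₁ h₂ => ?_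
  exact Finset.sum_mul_sub_sum_mul_le (fun j _ => (hw j).le) hw1 fun j _ =>
    petzRenyi_sub_le_of_thompson (hA j).1 hr h₁ h₂

/-- the variation of the objective `F` is controlled by the Thompson
metric: `F(U) - F(V) ≤ |1/(α-1)| * d_T(V^(1-α), U^(1-α))`. -/
theorem fval_thompson_bound {n d : ℕ} (α : ℝ)
    (hα : α ∈ Set.Ioo (0 : ℝ) 1 ∪ Set.Ioi (1 : ℝ))
    (A : Fin n → Matrix (Fin d) (Fin d) ℂ) (hA : ∀ j, IsDensityMatrix (A j))
    (hApos : (∑ j, A j).PosDef)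
    (w : Fin n → ℝ) (hw : ∀ j, 0 < w j) (hw1 : ∑ j, w j = 1)
    (U V : Matrix (Fin d) (Fin d) ℂ) (hU : U.PosDef) (hV : V.PosDef) :
    (((∑ j, w j * petzRenyi α (A j) U) - (∑ j, w j * petzRenyi α (A j) V) : ℝ) : EReal) ≤
      ((|1 / (α - 1)| : ℝ) : EReal) * dTmat (mpow V (1 - α)) (mpow U (1 - α)) :=
  fval_thompson_bound_general α hα A hA w hw hw1 U V

end
end

section
/- Let α ∈ [1/2, 1) and let a > b > 0 be real numbers. Then (a^{1/2} b^{α−1/2} − a^{α−1/2} b^{1/2}) / (1−α) ≤ (a^α − b^α) / α. -/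
open scoped ComplexOrder
open Matrix

noncomputable section

/-! With `a = t² b` and `β = 2α - 1` the inequality becomes, after dividing by `b ^ α`,
`(1 + β) (t - t ^ β) ≤ (1 - β) (t ^ (1 + β) - 1)` for `t ≥ 1`. Both sides vanish at `t = 1`, and
the derivative of their difference is `(1 + β)` times `(1 - β) t ^ β + β t ^ (β - 1) - 1`, which
is nonnegative by the weighted AM-GM inequality. -/

open Real

theorem one_le_sub_mul_rpow_add_mul_rpow_sub_one {β x : ℝ} (hβ₀ : 0 ≤ β) (hβ₁ : β ≤ 1)
    (hx : 0 < x) : 1 ≤ (1 - β) * x ^ β + β * x ^ (β - 1) := by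
  calc (1 : ℝ) = (x ^ β) ^ (1 - β) * (x ^ (β - 1)) ^ β := by
        rw [← rpow_mul hx.le, ← rpow_mul hx.le, ← rpow_add hx]
        ring_nf
        exact (rpow_zero x).symm
    _ ≤ (1 - β) * x ^ β + β * x ^ (β - 1) :=
        geom_mean_le_arith_mean2_weighted (by linarith) hβ₀ (rpow_nonneg hx.le β)
          (rpow_nonneg hx.le (β - 1)) (by ring)

theorem mul_sub_rpow_le_mul_rpow_sub_one {β t : ℝ} (hβ₀ : 0 ≤ β) (hβ₁ : β ≤ 1) (ht : 1 ≤ t) :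
    (1 + β) * (t - t ^ β) ≤ (1 - β) * (t ^ (1 + β) - 1) := by
  set f : ℝ → ℝ := fun x => (1 - β) * (x ^ (1 + β) - 1) - (1 + β) * (x - x ^ β)
  have hf : ∀ x, 0 < x → HasDerivAt f ((1 + β) * ((1 - β) * x ^ β + β * x ^ (β - 1) - 1)) x := by
    intro x hx
    refine ((((hasDerivAt_rpow_const (p := 1 + β) (Or.inl hx.ne')).sub_const 1).const_mul
      (1 - β)).sub (((hasDerivAt_id x).sub (hasDerivAt_rpow_const (Or.inl hx.ne'))).const_mul
      (1 + β))).congr_deriv ?_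
    rw [add_sub_cancel_left]
    ring
  have hmono : MonotoneOn f (Set.Ici 1) := by
    refine monotoneOn_of_deriv_nonneg (convex_Ici 1)
      (fun x hx => (hf x (by linarith [Set.mem_Ici.1 hx])).continuousAt.continuousWithinAt)
      (fun x hx => ?_) (fun x hx => ?_) <;>
      rw [interior_Ici, Set.mem_Ioi] at hx
    · exact (hf x (by linarith)).differentiableAt.differentiableWithinAt
    · rw [(hf x (by linarith)).deriv]
      have hamgm := one_le_sub_mul_rpow_add_mul_rpow_sub_one hβ₀ hβ₁ (by linarith : 0 < x)
      nlinarith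
  have hf₁ := hmono Set.self_mem_Ici (Set.mem_Ici.2 ht) ht
  simp only [f, one_rpow, sub_self, mul_zero] at hf₁
  linarith

theorem rpow_half_sub_rpow_div_le {α s : ℝ} (hα : α ∈ Set.Ico (1 / 2 : ℝ) 1) (hs : 1 ≤ s) :
    (s ^ ((1 : ℝ) / 2) - s ^ (α - 1 / 2)) / (1 - α) ≤ (s ^ α - 1) / α := by
  obtain ⟨hα₁, hα₂⟩ := hα
  have hs₀ : 0 ≤ s := by linarith
  have key := mul_sub_rpow_le_mul_rpow_sub_one (β := 2 * α - 1) (by linarith) (by linarith)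
    (one_le_rpow hs (by norm_num : (0 : ℝ) ≤ 1 / 2))
  rw [← rpow_mul hs₀, ← rpow_mul hs₀, show 1 / 2 * (2 * α - 1) = α - 1 / 2 by ring,
    show 1 / 2 * (1 + (2 * α - 1)) = α by ring] at key
  rw [div_le_div_iff₀ (by linarith) (by linarith)]
  linear_combination key / 2

/-- for `α ∈ [1/2, 1)` and `a > b > 0`,
`(a^(1/2) b^(α-1/2) - a^(α-1/2) b^(1/2)) / (1-α) ≤ (a^α - b^α) / α`. -/
theorem rpow_cross_inequality (α a b : ℝ) (hα : α ∈ Set.Ico (1/2 : ℝ) 1)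
    (hb : 0 < b) (hab : b < a) :
    (a ^ ((1:ℝ)/2) * b ^ (α - 1/2) - a ^ (α - 1/2) * b ^ ((1:ℝ)/2)) / (1 - α) ≤
      (a ^ α - b ^ α) / α := by
  obtain ⟨s, hs, rfl⟩ : ∃ s, 1 ≤ s ∧ a = s * b :=
    ⟨a / b, ((one_lt_div hb).2 hab).le, (div_mul_cancel₀ a hb.ne').symm⟩
  have hs₀ : 0 ≤ s := by linarith
  have hbα : b ^ ((1 : ℝ) / 2) * b ^ (α - 1 / 2) = b ^ α := by
    rw [← rpow_add hb]
    ring_nf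
  simp only [mul_rpow hs₀ hb.le]
  calc _ = b ^ α * ((s ^ ((1 : ℝ) / 2) - s ^ (α - 1 / 2)) / (1 - α)) := by
          rw [← hbα]
          ring
    _ ≤ b ^ α * ((s ^ α - 1) / α) :=
          mul_le_mul_of_nonneg_left (rpow_half_sub_rpow_div_le hα hs) (by positivity)
    _ = _ := by ring

end
end
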